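/- Suppose T is unbounded from above and from below (i.e., a_1 = −∞ and b_K = ∞). Then for every α ∈ (0,1), 2·Φ^{−1}(1 − p_* α/2) ≤ 2·Φ^{−1}(1 − α/2) + (a_K − b_1)/ς, where a_K − b_1 is to be interpreted as 0 in case K = 1. -/

import Mathlib

open Filter MeasureTheory ProbabilityTheory Set

/-- The cdf of the normal distribution with mean `θ` and variance `ς²`, truncated to the
set `T`: `F^T_{θ,ς²}(w) = P(V ≤ w ∧ V ∈ T) / P(V ∈ T)` for `V ~ N(θ, ς²)`. -/
noncomputable def truncNormalCDF (ς : ℝ) (T : Set ℝ) (θ w : ℝ) : ℝ :=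
  ((gaussianReal θ (Real.toNNReal (ς ^ 2))) (Set.Iic w ∩ T)).toReal /
    ((gaussianReal θ (Real.toNNReal (ς ^ 2))) T).toReal

/-- The standard normal cumulative distribution function. -/
noncomputable def stdNormalCDF (x : ℝ) : ℝ :=
  ∫ t in Set.Iic x, (Real.sqrt (2 * Real.pi))⁻¹ * Real.exp (-(t ^ 2) / 2)

/-- The inverse `Φ^{−1}` of the standard normal cdf on `(0,1)`. -/
noncomputable def stdNormalCDFInv (p : ℝ) : ℝ :=
  Function.invFun stdNormalCDF p

/-!
The set `T` contains `(-∞, b₁) ∪ (a_K, ∞)`, so `P(N(ϑ, ς²) ∈ T)` is at least the Gaussian mass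
outside an interval of length `a_K - b₁`; this mass is smallest when the interval is centred at
`ϑ`, whence `p_* ≥ 2 Φ(-c)` with `c = (a_K - b₁) / (2ς)`. By Mills' inequality the hazard rate
`φ / (1 - Φ)` increases, i.e. the tail `1 - Φ` is log-concave, so
`1 - Φ(x + c) ≤ 2 (1 - Φ(x)) (1 - Φ(c))` for `x, c ≥ 0`. For `x = Φ⁻¹(1 - α/2)` this reads
`1 - Φ(x + c) ≤ p_* α / 2`, that is `Φ⁻¹(1 - p_* α / 2) ≤ x + c`.
-/

open Real Topology

noncomputable def stdNormalPDF (t : ℝ) : ℝ := (√(2 * π))⁻¹ * exp (-(t ^ 2) / 2)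

local notation "φ" => stdNormalPDF
local notation "Φ" => stdNormalCDF

lemma stdNormalPDF_eq_gaussianPDFReal : φ = gaussianPDFReal 0 1 := by
  ext t
  simp [stdNormalPDF, gaussianPDFReal]

lemma stdNormalPDF_pos (t : ℝ) : 0 < φ t := by
  unfold stdNormalPDF
  positivity

lemma continuous_stdNormalPDF : Continuous φ := by
  unfold stdNormalPDF
  fun_prop

lemma integrable_stdNormalPDF : Integrable φ :=
  stdNormalPDF_eq_gaussianPDFReal ▸ integrable_gaussianPDFReal 0 1

lemma stdNormalPDF_neg (t : ℝ) : φ (-t) = φ t := by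
  simp [stdNormalPDF]

lemma stdNormalPDF_le_of_sq_le {s t : ℝ} (h : s ^ 2 ≤ t ^ 2) : φ t ≤ φ s := by
  unfold stdNormalPDF
  gcongr

lemma hasDerivAt_stdNormalPDF (t : ℝ) : HasDerivAt φ (-t * φ t) t := by
  have h : HasDerivAt (fun t ↦ -(t ^ 2) / 2) (-t) t :=
    ((hasDerivAt_pow 2 t).fun_neg.div_const 2).congr_deriv (by ring)
  exact (h.exp.const_mul _).congr_deriv (by rw [stdNormalPDF]; ring)

lemma setIntegral_stdNormalPDF_pos {s : Set ℝ} (h : volume s ≠ 0) :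
    0 < ∫ t in s, φ t := by
  rw [setIntegral_pos_iff_support_of_nonneg_ae (ae_of_all _ fun t ↦ (stdNormalPDF_pos t).le)
    integrable_stdNormalPDF.integrableOn, Function.support_eq_univ fun t ↦ (stdNormalPDF_pos t).ne',
    univ_inter]
  exact pos_iff_ne_zero.2 h

lemma stdNormalCDF_eq_integral (x : ℝ) : Φ x = ∫ t in Iic x, φ t := rfl

lemma gaussianReal_zero_one_real_eq_setIntegral (s : Set ℝ) :
    (gaussianReal 0 1).real s = ∫ t in s, φ t := by
  rw [measureReal_def, gaussianReal_apply_eq_integral 0 one_ne_zero, ENNReal.toReal_ofReal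
    (integral_nonneg (gaussianPDFReal_nonneg 0 1)), stdNormalPDF_eq_gaussianPDFReal]

lemma stdNormalCDF_eq_real_Iic (x : ℝ) : Φ x = (gaussianReal 0 1).real (Iic x) :=
  (gaussianReal_zero_one_real_eq_setIntegral _).symm

lemma stdNormalCDF_eq_cdf : Φ = cdf (gaussianReal 0 1) := by
  ext x
  rw [stdNormalCDF_eq_real_Iic, cdf_eq_real]

lemma one_sub_stdNormalCDF (x : ℝ) : 1 - Φ x = ∫ t in Ioi x, φ t := by
  rw [stdNormalCDF_eq_real_Iic, ← probReal_compl_eq_one_sub measurableSet_Iic, compl_Iic,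
    gaussianReal_zero_one_real_eq_setIntegral]

lemma stdNormalCDF_pos (x : ℝ) : 0 < Φ x :=
  setIntegral_stdNormalPDF_pos (by simp)

lemma stdNormalCDF_lt_one (x : ℝ) : Φ x < 1 := by
  linarith [one_sub_stdNormalCDF x, setIntegral_stdNormalPDF_pos (by simp : volume (Ioi x) ≠ 0)]

lemma strictMono_stdNormalCDF : StrictMono Φ := by
  intro x y hxy
  have hsplit : Φ y = Φ x + ∫ t in Ioc x y, φ t := by
    rw [stdNormalCDF_eq_integral, ← Iic_union_Ioc_eq_Iic hxy.le, setIntegral_union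
      (Iic_disjoint_Ioc le_rfl) measurableSet_Ioc integrable_stdNormalPDF.integrableOn
      integrable_stdNormalPDF.integrableOn, stdNormalCDF_eq_integral]
  linarith [setIntegral_stdNormalPDF_pos (by simp [hxy] : volume (Ioc x y) ≠ 0)]

lemma stdNormalCDF_neg (x : ℝ) : Φ (-x) = 1 - Φ x := by
  rw [one_sub_stdNormalCDF, stdNormalCDF_eq_integral, ← integral_comp_neg_Ioi]
  simp_rw [stdNormalPDF_neg]

lemma stdNormalCDF_zero : Φ 0 = 1 / 2 := by
  have h := stdNormalCDF_neg 0
  rw [neg_zero] at h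
  linarith

lemma hasDerivAt_stdNormalCDF (x : ℝ) : HasDerivAt Φ (φ x) x := by
  have hΦ : Φ = fun y ↦ Φ 0 + ∫ t in (0 : ℝ)..y, φ t := by
    ext y
    rw [stdNormalCDF_eq_integral, stdNormalCDF_eq_integral, ← intervalIntegral.integral_Iic_sub_Iic
      integrable_stdNormalPDF.integrableOn integrable_stdNormalPDF.integrableOn]
    ring
  rw [hΦ]
  exact (intervalIntegral.integral_hasDerivAt_right integrable_stdNormalPDF.intervalIntegrable
    (continuous_stdNormalPDF.stronglyMeasurableAtFilter _ _)
    continuous_stdNormalPDF.continuousAt).const_add _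

lemma continuous_stdNormalCDF : Continuous Φ :=
  continuous_iff_continuousAt.2 fun x ↦ (hasDerivAt_stdNormalCDF x).continuousAt

lemma stdNormalCDF_stdNormalCDFInv {p : ℝ} (hp : p ∈ Ioo 0 1) : Φ (stdNormalCDFInv p) = p := by
  refine Function.invFun_eq (mem_range_of_exists_le_of_exists_ge continuous_stdNormalCDF ?_ ?_)
  · rw [stdNormalCDF_eq_cdf]
    exact ((tendsto_order.1 (tendsto_cdf_atBot _)).2 p hp.1).exists.imp fun _ ↦ le_of_lt
  · rw [stdNormalCDF_eq_cdf]
    exact ((tendsto_order.1 (tendsto_cdf_atTop _)).1 p hp.2).exists.imp fun _ ↦ le_of_lt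

lemma tendsto_stdNormalPDF_atTop : Tendsto φ atTop (𝓝 0) := by
  have h : Tendsto (fun t : ℝ ↦ -(t ^ 2) / 2) atTop atBot :=
    (tendsto_neg_atTop_atBot.comp (tendsto_pow_atTop two_ne_zero)).atBot_div_const two_pos
  have h' := (tendsto_exp_atBot.comp h).const_mul (√(2 * π))⁻¹
  rwa [mul_zero] at h'

lemma integrable_mul_stdNormalPDF : Integrable fun t ↦ t * φ t :=
  ((integrable_mul_exp_neg_mul_sq (b := 1 / 2) one_half_pos).mul_const (√(2 * π))⁻¹).congr
    (ae_of_all _ fun t ↦ by simp only [stdNormalPDF]; ring_nf)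

lemma integral_Ioi_mul_stdNormalPDF (x : ℝ) : ∫ t in Ioi x, t * φ t = φ x := by
  have h := integral_Ioi_of_hasDerivAt_of_tendsto (f := fun t ↦ -φ t) (a := x) (m := 0)
    continuous_stdNormalPDF.neg.continuousWithinAt
    (fun t _ ↦ (hasDerivAt_stdNormalPDF t).neg.congr_deriv (by ring))
    integrable_mul_stdNormalPDF.integrableOn (by simpa using tendsto_stdNormalPDF_atTop.neg)
  simpa using h

lemma one_sub_stdNormalCDF_mul_le (x : ℝ) : (1 - Φ x) * x ≤ φ x := by
  rw [one_sub_stdNormalCDF, ← integral_mul_const, ← integral_Ioi_mul_stdNormalPDF x]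
  refine setIntegral_mono_on (integrable_stdNormalPDF.mul_const x).integrableOn
    integrable_mul_stdNormalPDF.integrableOn measurableSet_Ioi fun t ht ↦ ?_
  rw [mul_comm]
  exact mul_le_mul_of_nonneg_right (le_of_lt ht) (stdNormalPDF_pos t).le

lemma one_sub_stdNormalCDF_pos (x : ℝ) : 0 < 1 - Φ x :=
  sub_pos.2 (stdNormalCDF_lt_one x)

noncomputable def stdNormalHazard (x : ℝ) : ℝ := φ x / (1 - Φ x)

lemma hasDerivAt_log_one_sub_stdNormalCDF (x : ℝ) :
    HasDerivAt (fun y ↦ log (1 - Φ y)) (-stdNormalHazard x) x := by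
  have h := ((hasDerivAt_stdNormalCDF x).const_sub 1).log (one_sub_stdNormalCDF_pos x).ne'
  exact h.congr_deriv (neg_div _ _)

lemma monotone_stdNormalHazard : Monotone stdNormalHazard := by
  have hderiv (x : ℝ) : HasDerivAt stdNormalHazard
      (φ x * (φ x - (1 - Φ x) * x) / (1 - Φ x) ^ 2) x :=
    ((hasDerivAt_stdNormalPDF x).div ((hasDerivAt_stdNormalCDF x).const_sub 1)
      (one_sub_stdNormalCDF_pos x).ne').congr_deriv (by ring)
  refine monotone_of_deriv_nonneg (fun x ↦ (hderiv x).differentiableAt) fun x ↦ ?_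
  rw [(hderiv x).deriv]
  exact div_nonneg (mul_nonneg (stdNormalPDF_pos x).le
    (sub_nonneg.2 (one_sub_stdNormalCDF_mul_le x))) (sq_nonneg _)

lemma one_sub_stdNormalCDF_add_le {x c : ℝ} (hx : 0 ≤ x) (hc : 0 ≤ c) :
    1 - Φ (x + c) ≤ 2 * (1 - Φ x) * (1 - Φ c) := by
  set G : ℝ → ℝ := fun y ↦ log (1 - Φ (y + c)) - log (1 - Φ y)
  have hG (y : ℝ) : HasDerivAt G (stdNormalHazard y - stdNormalHazard (y + c)) y :=
    (((hasDerivAt_log_one_sub_stdNormalCDF (y + c)).comp_add_const y c).sub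
      (hasDerivAt_log_one_sub_stdNormalCDF y)).congr_deriv (by ring)
  have hanti : Antitone G := antitone_of_deriv_nonpos (fun y ↦ (hG y).differentiableAt)
    fun y ↦ (hG y).deriv ▸ sub_nonpos.2 (monotone_stdNormalHazard (le_add_of_nonneg_right hc))
  have hG0 : G 0 = log (1 - Φ c) + log 2 := by
    simp only [G, zero_add, stdNormalCDF_zero]
    rw [show (1 : ℝ) - 1 / 2 = 2⁻¹ by norm_num, log_inv, sub_neg_eq_add]
  have hGx : G x ≤ log (1 - Φ c) + log 2 := hG0 ▸ hanti hx
  have hx' := one_sub_stdNormalCDF_pos x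
  have hc' := one_sub_stdNormalCDF_pos c
  rw [← log_le_log_iff (one_sub_stdNormalCDF_pos _) (by positivity), log_mul (by positivity)
    hc'.ne', log_mul two_ne_zero hx'.ne']
  linarith

lemma two_mul_stdNormalCDF_neg_le {c : ℝ} (hc : 0 ≤ c) (t : ℝ) :
    2 * Φ (-c) ≤ Φ (t - c) + Φ (-t - c) := by
  set g : ℝ → ℝ := fun t ↦ Φ (t - c) + Φ (-t - c)
  have hg (t : ℝ) : HasDerivAt g (φ (t - c) - φ (t + c)) t := by
    have h := ((hasDerivAt_stdNormalCDF (t - c)).comp_sub_const t c).add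
      ((hasDerivAt_stdNormalCDF (-t - c)).comp t ((hasDerivAt_neg t).sub_const c))
    rw [show -t - c = -(t + c) by ring, stdNormalPDF_neg] at h
    exact h.congr_deriv (by ring)
  have hmono : MonotoneOn g (Ici 0) := by
    refine monotoneOn_of_hasDerivWithinAt_nonneg (convex_Ici 0)
      (fun t _ ↦ (hg t).continuousAt.continuousWithinAt) (fun t _ ↦ (hg t).hasDerivWithinAt)
      fun t ht ↦ sub_nonneg.2 (stdNormalPDF_le_of_sq_le ?_)
    rw [interior_Ici, mem_Ioi] at ht
    nlinarith
  have heven : g |t| = g t := by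
    rcases abs_choice t with h | h <;> simp only [g, h, neg_neg, add_comm]
  have h := hmono (mem_Ici.2 le_rfl) (mem_Ici.2 (abs_nonneg t)) (abs_nonneg t)
  simp only [heven, g, zero_sub, neg_zero] at h
  linarith

lemma stdNormalCDFInv_le_add {α c p : ℝ} (hα : α ∈ Ioo 0 1) (hc : 0 ≤ c) (hp : 2 * Φ (-c) ≤ p)
    (hp1 : p ≤ 1) : stdNormalCDFInv (1 - p * (α / 2)) ≤ stdNormalCDFInv (1 - α / 2) + c := by
  obtain ⟨hα0, hα1⟩ := hα
  have hp0 : 0 < p := (mul_pos two_pos (stdNormalCDF_pos _)).trans_le hp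
  set x := stdNormalCDFInv (1 - α / 2)
  have hx : Φ x = 1 - α / 2 := stdNormalCDF_stdNormalCDFInv ⟨by linarith, by linarith⟩
  have hx0 : 0 ≤ x := strictMono_stdNormalCDF.le_iff_le.1 (by rw [stdNormalCDF_zero, hx]; linarith)
  refine strictMono_stdNormalCDF.le_iff_le.1 ?_
  rw [stdNormalCDF_stdNormalCDFInv ⟨by nlinarith, by nlinarith⟩]
  have htail := one_sub_stdNormalCDF_add_le hx0 hc
  rw [hx, ← stdNormalCDF_neg c] at htail
  nlinarith [mul_le_mul_of_nonneg_right hp (by linarith : 0 ≤ α / 2)]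

lemma gaussianReal_eq_map_gaussianReal_zero_one (ϑ ς : ℝ) :
    gaussianReal ϑ (ς ^ 2).toNNReal = (gaussianReal 0 1).map (fun x ↦ ς * x + ϑ) := by
  change _ = (gaussianReal 0 1).map ((· + ϑ) ∘ (ς * ·))
  rw [← Measure.map_map (measurable_add_const ϑ) (measurable_const_mul ς),
    gaussianReal_map_const_mul, gaussianReal_map_add_const]
  congr 1
  · ring
  · ext
    simp [Real.coe_toNNReal _ (sq_nonneg ς)]

section Gaussian

variable {ς : ℝ}

lemma gaussianReal_Iic_toReal (hς : 0 < ς) (ϑ r : ℝ) :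
    (gaussianReal ϑ (ς ^ 2).toNNReal (Iic r)).toReal = Φ ((r - ϑ) / ς) := by
  have hpre : (fun x ↦ ς * x + ϑ) ⁻¹' Iic r = Iic ((r - ϑ) / ς) := by
    ext x
    rw [mem_preimage, mem_Iic, mem_Iic, le_div_iff₀ hς]
    constructor <;> intro h <;> linarith
  rw [gaussianReal_eq_map_gaussianReal_zero_one, Measure.map_apply (by fun_prop) measurableSet_Iic,
    hpre, stdNormalCDF_eq_real_Iic, measureReal_def]

lemma gaussianReal_Iio_toReal (hς : 0 < ς) (ϑ r : ℝ) :
    (gaussianReal ϑ (ς ^ 2).toNNReal (Iio r)).toReal = Φ ((r - ϑ) / ς) := by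
  have := nullSingletonClass_gaussianReal (μ := ϑ) (Real.toNNReal_pos.2 (pow_pos hς 2)).ne'
  rw [measure_congr Iio_ae_eq_Iic, gaussianReal_Iic_toReal hς]

lemma gaussianReal_Ioi_toReal (hς : 0 < ς) (ϑ r : ℝ) :
    (gaussianReal ϑ (ς ^ 2).toNNReal (Ioi r)).toReal = Φ (-((r - ϑ) / ς)) := by
  rw [← compl_Iic, ← measureReal_def, probReal_compl_eq_one_sub measurableSet_Iic, measureReal_def,
    gaussianReal_Iic_toReal hς, stdNormalCDF_neg]

lemma two_mul_stdNormalCDF_neg_le_gaussianReal_Iio_union_Ioi (hς : 0 < ς) {A B : ℝ} (hBA : B ≤ A)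
    (ϑ : ℝ) :
    2 * Φ (-((A - B) / (2 * ς))) ≤ (gaussianReal ϑ (ς ^ 2).toNNReal (Iio B ∪ Ioi A)).toReal := by
  rw [measure_union ((Iic_disjoint_Ioi hBA).mono_left Iio_subset_Iic_self) measurableSet_Ioi,
    ENNReal.toReal_add (measure_ne_top _ _) (measure_ne_top _ _), gaussianReal_Iio_toReal hς,
    gaussianReal_Ioi_toReal hς]
  have hc : 0 ≤ (A - B) / (2 * ς) := div_nonneg (sub_nonneg.2 hBA) (by positivity)
  have h := two_mul_stdNormalCDF_neg_le hc ((ϑ - (A + B) / 2) / ς)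
  have e₁ : (ϑ - (A + B) / 2) / ς - (A - B) / (2 * ς) = -((A - ϑ) / ς) := by
    field_simp
    ring
  have e₂ : -((ϑ - (A + B) / 2) / ς) - (A - B) / (2 * ς) = (B - ϑ) / ς := by
    field_simp
    ring
  rw [e₁, e₂] at h
  linarith

end Gaussian

lemma lt_of_interlaced {α : Type*} [Preorder α] {K : ℕ} {a b : ℕ → α}
    (hab : ∀ i < K, a i < b i) (hba : ∀ i, i + 1 < K → b i < a (i + 1)) {i j : ℕ} (hij : i < j)
    (hj : j < K) : b i < a j := by
  induction j, hij using Nat.le_induction with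
  | base => exact hba i hj
  | succ j hij ih => exact (ih (by omega)).trans ((hab j (by omega)).trans (hba j hj))

lemma EReal.exists_eq_coe_of_lt_of_lt {x y z : EReal} (hxy : x < y) (hyz : y < z) :
    ∃ r : ℝ, y = r :=
  ⟨y.toReal, (EReal.coe_toReal (ne_top_of_lt hyz) (ne_bot_of_gt hxy)).symm⟩

lemma Iio_union_Ioi_subset_iUnion {K : ℕ} {a b : ℕ → EReal} {A B : ℝ} (hK : 0 < K)
    (ha : a 0 = ⊥) (hb : b 0 = B) (ha' : a (K - 1) = A) (hb' : b (K - 1) = ⊤) :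
    Iio B ∪ Ioi A ⊆ ⋃ i ∈ Finset.range K, {x : ℝ | a i < x ∧ x < b i} := by
  rintro x (hx | hx)
  · exact mem_iUnion₂.2 ⟨0, Finset.mem_range.2 hK, by simpa [ha, hb] using hx⟩
  · exact mem_iUnion₂.2 ⟨K - 1, Finset.mem_range.2 (by omega), by simpa [ha', hb'] using hx⟩

/-- Suppose `T` is unbounded from above and from below (`a_1 = −∞` and `b_K = ∞`).
Then for every `α ∈ (0,1)`,
`2·Φ^{−1}(1 − p_* α/2) ≤ 2·Φ^{−1}(1 − α/2) + (a_K − b_1)/ς`, where `a_K − b_1` is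
interpreted as `0` in case `K = 1`, and `p_* = inf_{ϑ} P(N(ϑ,ς²) ∈ T)`. -/
theorem stmt_13
    (ς : ℝ) (hς : 0 < ς) (K : ℕ) (hK : 1 ≤ K) (a b : ℕ → EReal)
    (hab : ∀ i < K, a i < b i) (hba : ∀ i, i + 1 < K → b i < a (i + 1))
    (T : Set ℝ)
    (hT : T = ⋃ i ∈ Finset.range K, {x : ℝ | a i < (x : EReal) ∧ (x : EReal) < b i})
    (ha1 : a 0 = ⊥) (hbK : b (K - 1) = ⊤)
    (pstar : ℝ)
    (hp : pstar = ⨅ ϑ : ℝ, ((gaussianReal ϑ (Real.toNNReal (ς ^ 2))) T).toReal)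
    (α : ℝ) (hα : α ∈ Set.Ioo (0 : ℝ) 1) :
    2 * stdNormalCDFInv (1 - pstar * (α / 2)) ≤
      2 * stdNormalCDFInv (1 - α / 2) +
        (if K = 1 then 0 else (a (K - 1)).toReal - (b 0).toReal) / ς := by
  rcases hK.eq_or_lt with rfl | hK
  · have hT : T = univ := by simp [hT, ha1, hbK]
    simp [hp, hT]
  obtain ⟨B, hB⟩ := EReal.exists_eq_coe_of_lt_of_lt (ha1 ▸ hab 0 (by omega)) (hba 0 hK)
  have hBA := lt_of_interlaced hab hba (by omega : 0 < K - 1) (by omega)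
  obtain ⟨A, hA⟩ := EReal.exists_eq_coe_of_lt_of_lt hBA (hab (K - 1) (by omega))
  rw [hA, hB, EReal.coe_lt_coe_iff] at hBA
  have hsub := hT ▸ Iio_union_Ioi_subset_iUnion (by omega) ha1 hB hA hbK
  have hlow : 2 * stdNormalCDF (-((A - B) / (2 * ς))) ≤ pstar := hp ▸ le_ciInf fun ϑ ↦
    (two_mul_stdNormalCDF_neg_le_gaussianReal_Iio_union_Ioi hς hBA.le ϑ).trans
      (ENNReal.toReal_mono (measure_ne_top _ _) (measure_mono hsub))
  have hup : pstar ≤ 1 :=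
    hp ▸ (ciInf_le ⟨0, by rintro _ ⟨ϑ, rfl⟩; positivity⟩ 0).trans measureReal_le_one
  have h := stdNormalCDFInv_le_add hα (div_nonneg (sub_nonneg.2 hBA.le) (by positivity)) hlow hup
  rw [if_neg hK.ne', hA, hB, EReal.toReal_coe, EReal.toReal_coe,
    show (A - B) / ς = 2 * ((A - B) / (2 * ς)) by field_simp]
  linarith
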